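/- Let q be a formal variable (work in ℚ(q)[[x]]) with q not a root of unity. Define the q-exponential exp_p(x) = 1 + ∑_{n>0} x^n/(n)_p! where (n)_p = (p^n - 1)/(p - 1) and (n)_p! = (1)_p (2)_p ⋯ (n)_p. Then as formal power series in x: exp_{q^2}((q^{-1} - q) x) = exp( ∑_{n≥1} (q^{-1} - q)^{2n-1} x^n / (n [n]_q) ), where [n]_q = (q^n - q^{-n})/(q - q^{-1}). -/

import Mathlib

open PowerSeries

/-- Formal exponential of a power series (intended for series with zero constant term). -/
noncomputable def expPS {A : Type*} [CommRing A] [Algebra ℚ A] (f : PowerSeries A) :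
    PowerSeries A :=
  PowerSeries.mk fun n =>
    ∑ k ∈ Finset.range (n + 1), (k.factorial : ℚ)⁻¹ • (PowerSeries.coeff n (f ^ k))

/-- `(k)_p = (p^k - 1)/(p - 1)`. -/
noncomputable def pint {K : Type*} [Field K] (p : K) (k : ℕ) : K := (p ^ k - 1) / (p - 1)

/-- `(n)_p! = (1)_p (2)_p ⋯ (n)_p`. -/
noncomputable def pfact {K : Type*} [Field K] (p : K) : ℕ → K
  | 0 => 1
  | n + 1 => pfact p n * pint p (n + 1)

/-- symmetric q-integer `[k]_q = (q^k - q^{-k})/(q - q^{-1})`. -/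
noncomputable def qint {K : Type*} [Field K] (q : K) (k : ℕ) : K :=
  (q ^ k - q⁻¹ ^ k) / (q - q⁻¹)

/-- The q-exponential `exp_p(x) = 1 + ∑_{n>0} x^n/(n)_p!` evaluated at `c·x`,
as a power series. -/
noncomputable def qExp {K : Type*} [Field K] (p c : K) : PowerSeries K :=
  PowerSeries.mk fun n => c ^ n / pfact p n

set_option linter.unusedSectionVars false

open Finset

variable {K : Type*} [Field K] [CharZero K] [Algebra ℚ K]

lemma coeff_pow_eq_zero' {g : K⟦X⟧} (hg : constantCoeff g = 0) {n k : ℕ} (h : n < k) :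
    coeff n (g ^ k) = 0 := by
  obtain ⟨h', rfl⟩ := X_dvd_iff.mpr hg
  rw [mul_pow, coeff_X_pow_mul', if_neg (by omega)]

lemma coeff_expPS_eq {g : K⟦X⟧} (hg : constantCoeff g = 0) (n N : ℕ) (hN : n < N) :
    coeff n (expPS g) = ∑ k ∈ range N, ((k.factorial : K))⁻¹ * coeff n (g ^ k) := by
  rw [expPS, coeff_mk]
  have h1 : ∀ k ∈ range (n+1), (k.factorial : ℚ)⁻¹ • coeff n (g ^ k)
      = ((k.factorial : K))⁻¹ * coeff n (g ^ k) := by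
    intro k _; rw [Algebra.smul_def, eq_ratCast (algebraMap ℚ K)]; push_cast; ring
  rw [Finset.sum_congr rfl h1]
  apply Finset.sum_subset (Finset.range_subset_range.mpr hN)
  intro k hk hnk
  simp only [mem_range] at hk hnk
  rw [coeff_pow_eq_zero' hg (by omega), mul_zero]

lemma constantCoeff_expPS (g : K⟦X⟧) : constantCoeff (expPS g) = 1 := by
  have : constantCoeff (expPS g) = coeff 0 (expPS g) := by simp [coeff_zero_eq_constantCoeff]
  rw [this, expPS, coeff_mk]
  simp

lemma deriv_expPS {g : K⟦X⟧} (hg : constantCoeff g = 0) :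
    d⁄dX K (expPS g) = d⁄dX K g * expPS g := by
  ext n
  rw [coeff_derivative, coeff_expPS_eq hg (n+1) (n+2) (by omega)]
  have lhs1 : (∑ k ∈ range (n+2), ((k.factorial : K))⁻¹ * coeff (n+1) (g ^ k)) * (n+1)
      = ∑ k ∈ range (n+2), ((k.factorial : K))⁻¹ * ((k : K) * coeff n (g ^ (k-1) * d⁄dX K g)) := by
    rw [Finset.sum_mul]
    apply Finset.sum_congr rfl
    intro k _
    have h2 : coeff (n+1) (g ^ k) * (n+1) = coeff n (d⁄dX K (g ^ k)) :=
      (coeff_derivative _ n).symm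
    rw [mul_assoc, h2, Derivation.leibniz_pow, map_nsmul, nsmul_eq_mul, smul_eq_mul]
  rw [lhs1, Finset.sum_range_succ' _ (n+1)]
  have h0 : ((Nat.factorial 0 : K))⁻¹ * (((0:ℕ) : K) * coeff n (g ^ (0-1) * d⁄dX K g)) = 0 := by
    simp
  rw [h0, add_zero]
  have lhsterm : ∀ j ∈ range (n+1),
      (((j+1).factorial : K))⁻¹ * (((j+1 : ℕ) : K) * coeff n (g ^ ((j+1)-1) * d⁄dX K g))
      = ((j.factorial : K))⁻¹ * coeff n (d⁄dX K g * g ^ j) := by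
    intro j _
    rw [Nat.factorial_succ, Nat.add_sub_cancel, mul_comm (g ^ j)]
    push_cast
    have h1 : ((j:K)+1) ≠ 0 := Nat.cast_add_one_ne_zero j
    have h2 : ((j.factorial : K)) ≠ 0 := Nat.cast_ne_zero.mpr (Nat.factorial_ne_zero j)
    field_simp
  rw [Finset.sum_congr rfl lhsterm]
  -- RHS
  rw [coeff_mul]
  have rhs1 : ∀ p ∈ antidiagonal n, coeff p.1 (d⁄dX K g) * coeff p.2 (expPS g)
      = ∑ k ∈ range (n+1), ((k.factorial : K))⁻¹ * (coeff p.1 (d⁄dX K g) * coeff p.2 (g ^ k)) := by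
    intro p hp
    rw [Finset.HasAntidiagonal.mem_antidiagonal] at hp
    rw [coeff_expPS_eq hg p.2 (n+1) (by omega), Finset.mul_sum]
    apply Finset.sum_congr rfl; intro k _; ring
  rw [Finset.sum_congr rfl rhs1, Finset.sum_comm]
  apply Finset.sum_congr rfl
  intro k _
  rw [coeff_mul, Finset.mul_sum]

lemma ode_unique {F G h : K⟦X⟧} (h0 : coeff 0 F = coeff 0 G)
    (hF : d⁄dX K F = h * F) (hG : d⁄dX K G = h * G) : F = G := by
  ext n
  induction n using Nat.strong_induction_on with
  | _ n ih =>
    match n with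
    | 0 => exact h0
    | n+1 =>
      have hF' : coeff (n+1) F * (n+1) = coeff n (h * F) := by
        rw [← coeff_derivative, hF]
      have hG' : coeff (n+1) G * (n+1) = coeff n (h * G) := by
        rw [← coeff_derivative, hG]
      have heq : coeff n (h * F) = coeff n (h * G) := by
        rw [coeff_mul, coeff_mul]
        apply Finset.sum_congr rfl
        intro pr hpr
        rw [Finset.HasAntidiagonal.mem_antidiagonal] at hpr
        rw [ih pr.2 (by omega)]
      exact mul_right_cancel₀ (Nat.cast_add_one_ne_zero n) (by rw [hF', hG', heq])

lemma rescale_expPS (a : K) (g : K⟦X⟧) : rescale a (expPS g) = expPS (rescale a g) := by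
  ext n
  rw [coeff_rescale, expPS, expPS, coeff_mk, coeff_mk, Finset.mul_sum]
  apply Finset.sum_congr rfl
  intro k _
  rw [← map_pow, coeff_rescale, Algebra.smul_def, Algebra.smul_def, eq_ratCast (algebraMap ℚ K)]
  ring

/-- `log (1 + d X)` as an explicit power series. -/
noncomputable def logOneAdd (d : K) : K⟦X⟧ :=
  mk fun n => if n = 0 then 0 else -(-d) ^ n / n

lemma constantCoeff_logOneAdd (d : K) : constantCoeff (logOneAdd d) = 0 := by
  rw [logOneAdd, constantCoeff_mk]; simp

lemma coeff_linmul (d : K) (F : K⟦X⟧) (n : ℕ) :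
    coeff (n+1) ((1 + C d * X) * F) = coeff (n+1) F + d * coeff n F := by
  rw [add_mul, one_mul, map_add, mul_assoc, coeff_C_mul, coeff_succ_X_mul]

lemma coeff_zero_linmul (d : K) (F : K⟦X⟧) :
    coeff 0 ((1 + C d * X) * F) = coeff 0 F := by
  simp [coeff_zero_eq_constantCoeff, map_mul]

lemma deriv_logOneAdd (d : K) :
    (1 + C d * X) * d⁄dX K (logOneAdd d) = C d := by
  have hc : ∀ m : ℕ, coeff m (d⁄dX K (logOneAdd d)) = d * (-d) ^ m := by
    intro m
    rw [coeff_derivative, logOneAdd, coeff_mk, if_neg (Nat.succ_ne_zero m)]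
    have hm : ((m : K) + 1) ≠ 0 := Nat.cast_add_one_ne_zero m
    push_cast
    field_simp
    ring
  ext n
  match n with
  | 0 => rw [coeff_zero_linmul, hc, coeff_zero_C]; simp
  | n+1 =>
    rw [coeff_linmul, hc, hc, coeff_C, if_neg (Nat.succ_ne_zero n)]
    ring

lemma expPS_add_log {g : K⟦X⟧} (hg : constantCoeff g = 0) (d : K) :
    expPS (g + logOneAdd d) = (1 + C d * X) * expPS g := by
  have hgl : constantCoeff (g + logOneAdd d) = 0 := by
    rw [map_add, hg, constantCoeff_logOneAdd, add_zero]
  apply ode_unique (h := d⁄dX K (g + logOneAdd d))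
  · rw [coeff_zero_linmul]
    simp only [coeff_zero_eq_constantCoeff, constantCoeff_expPS]
  · exact deriv_expPS hgl
  · have hD : d⁄dX K (1 + C d * X) = C d := by simp
    have h1 : d⁄dX K ((1 + C d * X) * expPS g)
        = (1 + C d * X) * (d⁄dX K g * expPS g) + expPS g * C d := by
      rw [Derivation.leibniz, smul_eq_mul, smul_eq_mul, deriv_expPS hg, hD]
    rw [h1, map_add (d⁄dX K)]
    linear_combination (-(expPS g)) * deriv_logOneAdd d

lemma qdiff_unique {p d : K} (hp : ∀ n : ℕ, 0 < n → p ^ n ≠ 1) {F G : K⟦X⟧}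
    (h0 : coeff 0 F = coeff 0 G)
    (hF : rescale p F = (1 + C d * X) * F)
    (hG : rescale p G = (1 + C d * X) * G) : F = G := by
  ext n
  induction n using Nat.strong_induction_on with
  | _ n ih =>
    match n with
    | 0 => exact h0
    | n+1 =>
      have hF' : p ^ (n+1) * coeff (n+1) F = coeff (n+1) F + d * coeff n F := by
        rw [← coeff_rescale, hF, coeff_linmul]
      have hG' : p ^ (n+1) * coeff (n+1) G = coeff (n+1) G + d * coeff n G := by
        rw [← coeff_rescale, hG, coeff_linmul]
      have hne : p ^ (n+1) - 1 ≠ 0 := sub_ne_zero.mpr (hp (n+1) (Nat.succ_pos n))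
      have ihn := ih n (by omega)
      apply mul_left_cancel₀ hne
      have e1 : (p ^ (n+1) - 1) * coeff (n+1) F = d * coeff n F := by
        linear_combination hF'
      have e2 : (p ^ (n+1) - 1) * coeff (n+1) G = d * coeff n G := by
        linear_combination hG'
      rw [e1, e2, ihn]

lemma pfact_ne_zero {p : K} (hp1 : p ≠ 1) (hp : ∀ n : ℕ, 0 < n → p ^ n ≠ 1) (n : ℕ) :
    pfact p n ≠ 0 := by
  induction n with
  | zero => simp [pfact]
  | succ m ih =>
    rw [pfact]
    apply mul_ne_zero ih
    rw [pint]
    exact div_ne_zero (sub_ne_zero.mpr (hp (m+1) (Nat.succ_pos m)))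
      (sub_ne_zero.mpr hp1)

lemma qExp_qdiff {p c : K} (hp1 : p ≠ 1) (hp : ∀ n : ℕ, 0 < n → p ^ n ≠ 1) :
    rescale p (qExp p c) = (1 + C ((p - 1) * c) * X) * qExp p c := by
  ext n
  match n with
  | 0 =>
    rw [coeff_zero_linmul, coeff_rescale, pow_zero, one_mul]
  | m+1 =>
    rw [coeff_rescale, coeff_linmul, qExp]
    simp only [coeff_mk]
    have h1 : pfact p (m+1) = pfact p m * ((p ^ (m+1) - 1) / (p - 1)) := rfl
    have hf : pfact p m ≠ 0 := pfact_ne_zero hp1 hp m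
    have hnum : p ^ (m+1) - 1 ≠ 0 := sub_ne_zero.mpr (hp (m+1) (Nat.succ_pos m))
    have hden : p - 1 ≠ 0 := sub_ne_zero.mpr hp1
    rw [h1]
    field_simp
    ring

theorem stmt6 :
    letI K := RatFunc ℚ
    letI q : K := RatFunc.X
    qExp (q ^ 2) (q⁻¹ - q) =
      expPS (PowerSeries.mk fun n =>
        if n = 0 then (0 : K) else (q⁻¹ - q) ^ (2 * n - 1) / ((n : K) * qint q n)) := by
  haveI : CharZero (RatFunc ℚ) :=
    charZero_of_injective_algebraMap (algebraMap ℚ (RatFunc ℚ)).injective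
  set q : RatFunc ℚ := RatFunc.X with hqdef
  have hq0 : q ≠ 0 := RatFunc.X_ne_zero
  have hqn : ∀ n : ℕ, 0 < n → q ^ n ≠ 1 := by
    intro n hn h
    rw [hqdef, ← RatFunc.algebraMap_X (K := ℚ), ← map_pow,
      ← map_one (algebraMap (Polynomial ℚ) (RatFunc ℚ))] at h
    have h2 := RatFunc.algebraMap_injective ℚ h
    have h3 := congrArg Polynomial.natDegree h2
    rw [Polynomial.natDegree_X_pow, Polynomial.natDegree_one] at h3
    omega
  set p : RatFunc ℚ := q ^ 2 with hpdef
  set c : RatFunc ℚ := q⁻¹ - q with hcdef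
  set d : RatFunc ℚ := (p - 1) * c with hddef
  have hp1 : p ≠ 1 := hqn 2 (by omega)
  have hp : ∀ n : ℕ, 0 < n → p ^ n ≠ 1 := by
    intro n hn
    rw [hpdef, ← pow_mul]
    exact hqn (2 * n) (by omega)
  have hq2 : q ^ 2 - 1 ≠ 0 := sub_ne_zero.mpr (hqn 2 (by omega))
  have hqq : q - q⁻¹ ≠ 0 := by
    intro h
    apply hq2
    have h2 := sub_eq_zero.mp h
    rw [sub_eq_zero, sq]
    nth_rewrite 2 [h2]
    exact mul_inv_cancel₀ hq0
  set g : (RatFunc ℚ)⟦X⟧ := PowerSeries.mk fun n =>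
    if n = 0 then (0 : RatFunc ℚ) else c ^ (2 * n - 1) / ((n : RatFunc ℚ) * qint q n) with hgdef
  have hg : constantCoeff g = 0 := by rw [hgdef, constantCoeff_mk]; simp
  have hmd : -d = q * c ^ 2 := by
    rw [hddef, hpdef, hcdef]
    field_simp
    ring
  have key : rescale p g = g + logOneAdd d := by
    ext n
    match n with
    | 0 => simp [hgdef, logOneAdd, coeff_rescale, coeff_mk]
    | m+1 =>
      rw [coeff_rescale, map_add, hgdef, logOneAdd]
      simp only [coeff_mk, Nat.succ_ne_zero, if_false]
      have h21 : 2 * (m + 1) - 1 = 2 * m + 1 := by omega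
      rw [h21, qint, inv_pow]
      have hQ : q ^ (m+1) ≠ 0 := pow_ne_zero _ hq0
      have hM : (((m+1 : ℕ)) : RatFunc ℚ) ≠ 0 := Nat.cast_ne_zero.mpr (by omega)
      have hnum : q ^ (m+1) - (q ^ (m+1))⁻¹ ≠ 0 := by
        intro h
        have h2 := sub_eq_zero.mp h
        have h3 : q ^ ((m+1) + (m+1)) = 1 := by
          rw [pow_add]
          nth_rewrite 2 [h2]
          exact mul_inv_cancel₀ hQ
        exact hqn ((m+1)+(m+1)) (by omega) h3
      have hp2 : p ^ (m+1) = (q ^ (m+1)) ^ 2 := by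
        rw [hpdef, ← pow_mul, mul_comm 2 (m+1), pow_mul]
      have hneg : (-d) ^ (m+1) = q ^ (m+1) * (c ^ (2*m+1) * c) := by
        rw [hmd, mul_pow, ← pow_mul, show 2*(m+1) = 2*m+1+1 from by ring, pow_succ]
        ring
      rw [hp2, hneg]
      have main : ∀ Q M A : RatFunc ℚ, Q ≠ 0 → M ≠ 0 → Q - Q⁻¹ ≠ 0 →
          Q ^ 2 * (A / (M * ((Q - Q⁻¹) / (q - q⁻¹))))
            = A / (M * ((Q - Q⁻¹) / (q - q⁻¹))) + -(Q * (A * c)) / M := by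
        intro Q M A hQ' hM' hJ'
        have hQ2' : Q ^ 2 - 1 ≠ 0 := by
          have e : Q ^ 2 - 1 = Q * (Q - Q⁻¹) := by field_simp
          rw [e]; exact mul_ne_zero hQ' hJ'
        have e1 : Q - Q⁻¹ = (Q ^ 2 - 1) / Q := by field_simp
        have e2 : q - q⁻¹ = (q ^ 2 - 1) / q := by field_simp
        have e3 : c = (1 - q ^ 2) / q := by rw [hcdef]; field_simp
        rw [e1, e2, e3]
        field_simp
        ring
      exact main _ _ _ hQ hM hnum
  have hL : rescale p (qExp p c) = (1 + C d * X) * qExp p c := qExp_qdiff hp1 hp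
  have hR : rescale p (expPS g) = (1 + C d * X) * expPS g := by
    rw [rescale_expPS, key, expPS_add_log hg]
  have h0 : coeff 0 (qExp p c) = coeff 0 (expPS g) := by
    rw [qExp, coeff_mk, coeff_zero_eq_constantCoeff, constantCoeff_expPS]
    simp [pfact]
  have final : qExp p c = @expPS (RatFunc ℚ) _ DivisionRing.toRatAlgebra g :=
    qdiff_unique hp h0 hL hR
  convert final using 2
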